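/- (First-order condition at a maximizing direction; step (4) in the proof of the paper's Lemma on holomorphic sectional curvature.) Let R be a Kähler-like curvature tensor on V and let u be a unit vector with H(u) ≥ H(v) for every unit vector v ∈ V. Then for every unit vector w ∈ V with ⟨w,u⟩ = 0, one has R(u,u,u,w) = 0 and R(u,u,w,u) = 0 (here u occupies all remaining slots, and w occupies the fourth and third slot respectively). -/

import Mathlib

/-- A Kähler-like curvature tensor on a complex vector space `V`:
a map `R : V × V × V × V → ℂ` that is complex-linear in the first and third
arguments, conjugate-linear in the second and fourth arguments, and satisfies
the symmetries `R(X,Y,Z,W) = R(Z,Y,X,W)` and `R(X,Y,Z,W) = conj (R(Y,X,W,Z))`. -/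
structure IsKahlerLike {V : Type*} [AddCommGroup V] [Module ℂ V]
    (R : V → V → V → V → ℂ) : Prop where
  add1 : ∀ X X' Y Z W, R (X + X') Y Z W = R X Y Z W + R X' Y Z W
  smul1 : ∀ (a : ℂ) (X Y Z W), R (a • X) Y Z W = a * R X Y Z W
  add2 : ∀ X Y Y' Z W, R X (Y + Y') Z W = R X Y Z W + R X Y' Z W
  smul2 : ∀ (a : ℂ) (X Y Z W), R X (a • Y) Z W = (starRingEnd ℂ) a * R X Y Z W
  add3 : ∀ X Y Z Z' W, R X Y (Z + Z') W = R X Y Z W + R X Y Z' W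
  smul3 : ∀ (a : ℂ) (X Y Z W), R X Y (a • Z) W = a * R X Y Z W
  add4 : ∀ X Y Z W W', R X Y Z (W + W') = R X Y Z W + R X Y Z W'
  smul4 : ∀ (a : ℂ) (X Y Z W), R X Y Z (a • W) = (starRingEnd ℂ) a * R X Y Z W
  sym13 : ∀ X Y Z W, R X Y Z W = R Z Y X W
  symConj : ∀ X Y Z W, R X Y Z W = (starRingEnd ℂ) (R Y X W Z)

/-! If `u` maximizes `H` on the unit sphere, then `v ↦ Re R(v,v,v,v) - H(u) ‖v‖⁴` is
nonpositive and vanishes at `u`. Along the line `u + t a w` with `w ⟂ u` its first-order term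
in `t` is `4 Re (a R(u,u,w,u))`, which therefore cannot be positive for any `a ∈ ℂ`; taking
`a = conj R(u,u,w,u)` gives `R(u,u,w,u) = 0`, and `R(u,u,u,w)` is its conjugate. -/

open Filter Topology ComplexConjugate

lemma nonpos_of_forall_pos_mul_le_sq_mul {L : ℝ} {g : ℝ → ℝ} (hg : ContinuousAt g 0)
    (h : ∀ t > 0, L * t ≤ t ^ 2 * g t) : L ≤ 0 := by
  have hlim : Tendsto (fun t => t * g t) (𝓝[>] 0) (𝓝 0) := by
    simpa using (tendsto_id.mul hg.tendsto).mono_left nhdsWithin_le_nhds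
  refine ge_of_tendsto hlim (eventually_nhdsWithin_of_forall fun t (ht : 0 < t) => ?_)
  have := h t ht
  rw [sq, mul_assoc, mul_comm L] at this
  exact le_of_mul_le_mul_left this ht

def firstVariation {V : Type*} (R : V → V → V → V → ℂ) (x y : V) : ℂ :=
  R y x x x + R x y x x + R x x y x + R x x x y

namespace IsKahlerLike

section Module

variable {V : Type*} [AddCommGroup V] [Module ℂ V] {R : V → V → V → V → ℂ}

lemma apply_ofReal_smul_self (hR : IsKahlerLike R) (s : ℝ) (v : V) :
    R ((s : ℂ) • v) ((s : ℂ) • v) ((s : ℂ) • v) ((s : ℂ) • v) = (s : ℂ) ^ 4 * R v v v v := by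
  simp only [hR.smul1, hR.smul2, hR.smul3, hR.smul4, Complex.conj_ofReal]
  ring

lemma exists_apply_add_smul_self_eq (hR : IsKahlerLike R) (x y : V) :
    ∃ p : ℝ → ℂ, Continuous p ∧ ∀ t : ℝ,
      R (x + (t : ℂ) • y) (x + (t : ℂ) • y) (x + (t : ℂ) • y) (x + (t : ℂ) • y) =
        R x x x x + t * firstVariation R x y + t ^ 2 * p t := by
  refine ⟨fun t => (R y y x x + R y x y x + R y x x y + R x y y x + R x y x y + R x x y y)
      + t * (R y y y x + R y y x y + R y x y y + R x y y y) + t ^ 2 * R y y y y,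
    by fun_prop, fun t => ?_⟩
  simp only [firstVariation, hR.add1, hR.add2, hR.add3, hR.add4, hR.smul1, hR.smul2, hR.smul3,
    hR.smul4, Complex.conj_ofReal]
  ring

lemma firstVariation_smul (hR : IsKahlerLike R) (a : ℂ) (u w : V) :
    firstVariation R u (a • w) = 2 * (a * R u u w u) + 2 * conj (a * R u u w u) := by
  have h1 : R w u u u = R u u w u := hR.sym13 w u u u
  have h2 : R u w u u = conj (R u u w u) := by rw [hR.symConj u w u u, h1]
  have h3 : R u u u w = conj (R u u w u) := hR.symConj u u u w
  simp only [firstVariation, hR.smul1, hR.smul2, hR.smul3, hR.smul4, h1, h2, h3, map_mul]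
  ring

lemma firstVariation_conj_smul (hR : IsKahlerLike R) (u w : V) :
    firstVariation R u (conj (R u u w u) • w) = ((4 * ‖R u u w u‖ ^ 2 : ℝ) : ℂ) := by
  rw [hR.firstVariation_smul, Complex.conj_mul', ← Complex.ofReal_pow, Complex.conj_ofReal]
  push_cast
  ring

end Module

section InnerProductSpace

variable {V : Type*} [NormedAddCommGroup V] [InnerProductSpace ℂ V] {R : V → V → V → V → ℂ}

lemma re_apply_self_le_mul_norm_pow_four (hR : IsKahlerLike R) {u : V}
    (hmax : ∀ v : V, ‖v‖ = 1 → (R v v v v).re ≤ (R u u u u).re) (v : V) :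
    (R v v v v).re ≤ (R u u u u).re * ‖v‖ ^ 4 := by
  rcases eq_or_ne v 0 with rfl | hv
  · simpa using congrArg Complex.re (hR.smul1 0 0 0 0 0) |>.le
  have hv' : 0 < ‖v‖ := norm_pos_iff.mpr hv
  have hunit : ‖((‖v‖⁻¹ : ℝ) : ℂ) • v‖ = 1 := by
    rw [norm_smul, Complex.norm_real, norm_inv, norm_norm, inv_mul_cancel₀ hv'.ne']
  have hscale : v = ((‖v‖ : ℝ) : ℂ) • ((‖v‖⁻¹ : ℝ) : ℂ) • v := by
    rw [smul_smul, ← Complex.ofReal_mul, mul_inv_cancel₀ hv'.ne', Complex.ofReal_one, one_smul]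
  conv_lhs => rw [hscale]
  rw [hR.apply_ofReal_smul_self, ← Complex.ofReal_pow, Complex.re_ofReal_mul, mul_comm]
  exact mul_le_mul_of_nonneg_right (hmax _ hunit) (by positivity)

lemma re_firstVariation_nonpos (hR : IsKahlerLike R) {x y : V} (hx : ‖x‖ = 1)
    (hyx : inner ℂ y x = 0) (hmax : ∀ v : V, (R v v v v).re ≤ (R x x x x).re * ‖v‖ ^ 4) :
    (firstVariation R x y).re ≤ 0 := by
  obtain ⟨p, hp, hexp⟩ := hR.exists_apply_add_smul_self_eq x y
  refine nonpos_of_forall_pos_mul_le_sq_mul (g := fun t =>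
    (R x x x x).re * (2 * ‖y‖ ^ 2 + t ^ 2 * ‖y‖ ^ 4) - (p t).re) (by fun_prop) fun t _ => ?_
  have hnorm : ‖x + (t : ℂ) • y‖ ^ 2 = 1 + t ^ 2 * ‖y‖ ^ 2 := by
    have hxy : inner ℂ x ((t : ℂ) • y) = 0 := by
      rw [inner_smul_right, inner_eq_zero_symm.mp hyx, mul_zero]
    rw [sq, norm_add_sq_eq_norm_sq_add_norm_sq_of_inner_eq_zero _ _ hxy, norm_smul,
      Complex.norm_real, hx, Real.norm_eq_abs]
    nlinarith [sq_abs t]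
  have h := hmax (x + (t : ℂ) • y)
  rw [hexp t, show ‖x + (t : ℂ) • y‖ ^ 4 = (‖x + (t : ℂ) • y‖ ^ 2) ^ 2 by ring, hnorm] at h
  simp only [Complex.add_re, ← Complex.ofReal_pow, Complex.re_ofReal_mul] at h
  linear_combination h

end InnerProductSpace

end IsKahlerLike

theorem kahlerLike_max_first_order_general {V : Type*} [NormedAddCommGroup V] [InnerProductSpace ℂ V]
    (R : V → V → V → V → ℂ) (hR : IsKahlerLike R)
    (u : V) (hu : ‖u‖ = 1)
    (hmax : ∀ v : V, ‖v‖ = 1 → (R v v v v).re ≤ (R u u u u).re) :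
    ∀ w : V, ‖w‖ = 1 → (inner ℂ w u : ℂ) = 0 →
      R u u u w = 0 ∧ R u u w u = 0 := by
  intro w _ hwu
  have hvar := hR.re_firstVariation_nonpos hu (y := conj (R u u w u) • w)
    (by rw [inner_smul_left, hwu, mul_zero]) (hR.re_apply_self_le_mul_norm_pow_four hmax)
  rw [hR.firstVariation_conj_smul, Complex.ofReal_re] at hvar
  have hc : R u u w u = 0 := norm_eq_zero.mp (by nlinarith [norm_nonneg (R u u w u)])
  exact ⟨by rw [hR.symConj u u u w, hc, map_zero], hc⟩

/-- First-order condition at a maximizing direction: if the unit vector `u` maximizes the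
holomorphic sectional curvature over unit vectors, then for every unit vector `w` orthogonal
to `u` one has `R(u,u,u,w) = 0` and `R(u,u,w,u) = 0`. -/
theorem kahlerLike_max_first_order {V : Type*} [NormedAddCommGroup V] [InnerProductSpace ℂ V]
    [FiniteDimensional ℂ V]
    (R : V → V → V → V → ℂ) (hR : IsKahlerLike R)
    (u : V) (hu : ‖u‖ = 1)
    (hmax : ∀ v : V, ‖v‖ = 1 → (R v v v v).re ≤ (R u u u u).re) :
    ∀ w : V, ‖w‖ = 1 → (inner ℂ w u : ℂ) = 0 →
      R u u u w = 0 ∧ R u u w u = 0 :=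
  kahlerLike_max_first_order_general R hR u hu hmax
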